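/- arXiv:1905.04490 — 4 statements merged into one kernel-verified Lean document; each statement's English description precedes it below -/
import Mathlib

section
/- Let G be a simple 3-regular graph and let v be a vertex of G whose neighbourhood contains no triangle (i.e., v lies on no triangle). Then there exists a valid make triangle switch producing a graph G' in which v lies on a triangle: that is, there exist distinct vertices y,x,v,w,z such that yxvwz is a path in G, the edges xw and yz are absent from G, and replacing edges xy, wz by xw, yz yields a simple 3-regular graph with a triangle on v, x, w. -/
open SimpleGraph

private lemma adj_aux {n : ℕ} {G : SimpleGraph (Fin n)} {y x w z : Fin n}
    (hxw : x ≠ w) (hyz : y ≠ z) : ∀ u t : Fin n,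
    (SimpleGraph.fromEdgeSet ((G.edgeSet \ {s(x,y), s(w,z)}) ∪ {s(x,w), s(y,z)})).Adj u t ↔
      ((G.Adj u t ∧ s(u,t) ≠ s(x,y) ∧ s(u,t) ≠ s(w,z)) ∨ s(u,t) = s(x,w) ∨ s(u,t) = s(y,z)) := by
  intro u t
  constructor
  · intro h
    rw [SimpleGraph.fromEdgeSet_adj] at h
    simp only [Set.mem_union, Set.mem_diff, Set.mem_insert_iff, Set.mem_singleton_iff,
      SimpleGraph.mem_edgeSet] at h
    tauto
  · intro h
    rw [SimpleGraph.fromEdgeSet_adj]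
    simp only [Set.mem_union, Set.mem_diff, Set.mem_insert_iff, Set.mem_singleton_iff,
      SimpleGraph.mem_edgeSet]
    rcases h with ⟨h1, h2, h3⟩ | h | h
    · exact ⟨Or.inl ⟨h1, by tauto⟩, h1.ne⟩
    · rw [Sym2.eq_iff] at h
      refine ⟨Or.inr (Or.inl (by rw [Sym2.eq_iff]; tauto)), ?_⟩
      rintro rfl; rcases h with ⟨rfl, rfl⟩ | ⟨rfl, rfl⟩ <;> exact hxw rfl
    · rw [Sym2.eq_iff] at h
      refine ⟨Or.inr (Or.inr (by rw [Sym2.eq_iff]; tauto)), ?_⟩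
      rintro rfl; rcases h with ⟨rfl, rfl⟩ | ⟨rfl, rfl⟩ <;> exact hyz rfl

private lemma nbr_aux {n : ℕ} {G : SimpleGraph (Fin n)} {y x w z : Fin n}
    (hxy' : x ≠ y) (hxw : x ≠ w) (hxz : x ≠ z) (hyz : y ≠ z)
    (haxy : G.Adj x y) (hnxw : ¬ G.Adj x w)
    (hx3 : (G.neighborSet x).ncard = 3) :
    ((SimpleGraph.fromEdgeSet
        ((G.edgeSet \ {s(x,y), s(w,z)}) ∪ {s(x,w), s(y,z)})).neighborSet x).ncard = 3 := by
  have hset : (SimpleGraph.fromEdgeSet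
      ((G.edgeSet \ {s(x,y), s(w,z)}) ∪ {s(x,w), s(y,z)})).neighborSet x
      = insert w (G.neighborSet x \ {y}) := by
    ext t
    simp only [mem_neighborSet, adj_aux hxw hyz, Set.mem_insert_iff, Set.mem_diff,
      Set.mem_singleton_iff, ne_eq, Sym2.eq_iff]
    constructor
    · rintro (⟨h1, h2, h3⟩ | (⟨-, rfl⟩|⟨h4, -⟩) | (⟨h4, -⟩|⟨h4, -⟩))
      · exact Or.inr ⟨h1, fun hc => h2 (Or.inl ⟨trivial, hc⟩)⟩
      · exact Or.inl rfl
      · exact absurd h4 hxw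
      · exact absurd h4 hxy'
      · exact absurd h4 hxz
    · rintro (rfl | ⟨h1, h2⟩)
      · exact Or.inr (Or.inl (Or.inl ⟨trivial, rfl⟩))
      · refine Or.inl ⟨h1, ?_, ?_⟩
        · rintro (⟨-, rfl⟩ | ⟨hc, -⟩)
          · exact h2 rfl
          · exact hxy' hc
        · rintro (⟨hc, -⟩ | ⟨hc, -⟩)
          · exact hxw hc
          · exact hxz hc
  rw [hset, Set.ncard_insert_of_notMem (fun hc => hnxw hc.1),
    Set.ncard_diff_singleton_of_mem ((G.mem_neighborSet x y).mpr haxy), hx3]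

private lemma switch_aux {n : ℕ} {G : SimpleGraph (Fin n)}
    (hreg : ∀ u, (G.neighborSet u).ncard = 3)
    {y x v w z : Fin n}
    (hyx : y ≠ x) (hyv : y ≠ v) (hyw : y ≠ w) (hyz : y ≠ z)
    (hxv : x ≠ v) (hxw : x ≠ w) (hxz : x ≠ z)
    (hvw : v ≠ w) (hvz : v ≠ z) (hwz : w ≠ z)
    (hxy : G.Adj x y) (hvx : G.Adj v x) (hvwa : G.Adj v w) (hwza : G.Adj w z)
    (hnxw : ¬ G.Adj x w) (hnyz : ¬ G.Adj y z) :
    (let G' := SimpleGraph.fromEdgeSet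
        ((G.edgeSet \ {s(x,y), s(w,z)}) ∪ {s(x,w), s(y,z)});
      (∀ u, (G'.neighborSet u).ncard = 3) ∧ G'.Adj v x ∧ G'.Adj v w ∧ G'.Adj x w) := by
  intro G'
  have hadj := adj_aux (G := G) hxw hyz
  have nepair : ∀ {p q r s : Fin n}, p ≠ r → p ≠ s → s(p,q) ≠ s(r,s) := by
    intro p q r s h1 h2 h
    rw [Sym2.eq_iff] at h; tauto
  have hE1 : (G.edgeSet \ {s(x,y), s(w,z)}) ∪ {s(x,w), s(y,z)}
      = (G.edgeSet \ {s(y,x), s(z,w)}) ∪ {s(y,z), s(x,w)} := by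
    rw [Sym2.eq_swap (a := y) (b := x), Sym2.eq_swap (a := z) (b := w),
      Set.pair_comm s(y,z) s(x,w)]
  have hE2 : (G.edgeSet \ {s(x,y), s(w,z)}) ∪ {s(x,w), s(y,z)}
      = (G.edgeSet \ {s(w,z), s(x,y)}) ∪ {s(w,x), s(z,y)} := by
    rw [Sym2.eq_swap (a := w) (b := x), Sym2.eq_swap (a := z) (b := y),
      Set.pair_comm s(x,y) s(w,z), Set.pair_comm s(x,w) s(y,z)]
  have hE3 : (G.edgeSet \ {s(x,y), s(w,z)}) ∪ {s(x,w), s(y,z)}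
      = (G.edgeSet \ {s(z,w), s(y,x)}) ∪ {s(z,y), s(w,x)} := by
    rw [Sym2.eq_swap (a := z) (b := w), Sym2.eq_swap (a := y) (b := x),
      Sym2.eq_swap (a := z) (b := y), Sym2.eq_swap (a := w) (b := x),
      Set.pair_comm s(x,y) s(w,z), Set.pair_comm s(x,w) s(y,z)]
  refine ⟨?_, ?_, ?_, ?_⟩
  · intro u
    show ((SimpleGraph.fromEdgeSet
        ((G.edgeSet \ {s(x,y), s(w,z)}) ∪ {s(x,w), s(y,z)})).neighborSet u).ncard = 3
    by_cases hux : u = x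
    · subst hux; exact nbr_aux hyx.symm hxw hxz hyz hxy hnxw (hreg u)
    by_cases huy : u = y
    · subst huy
      rw [hE1]
      exact nbr_aux hyx hyz hyw hxw (hxy.symm) (fun hc => hnyz hc) (hreg u)
    by_cases huw : u = w
    · subst huw
      rw [hE2]
      exact nbr_aux hwz hxw.symm hyw.symm hyz.symm hwza (fun hc => hnxw hc.symm) (hreg u)
    by_cases huz : u = z
    · subst huz
      rw [hE3]
      exact nbr_aux hwz.symm hyz.symm hxz.symm hxw.symm (hwza.symm) (fun hc => hnyz hc.symm) (hreg u)
    · have : (SimpleGraph.fromEdgeSet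
          ((G.edgeSet \ {s(x,y), s(w,z)}) ∪ {s(x,w), s(y,z)})).neighborSet u
          = G.neighborSet u := by
        ext t
        simp only [mem_neighborSet, hadj, ne_eq, Sym2.eq_iff]
        constructor
        · rintro (⟨h1, -, -⟩ | (⟨rfl, -⟩|⟨rfl, -⟩) | (⟨rfl, -⟩|⟨rfl, -⟩))
          · exact h1
          · exact absurd rfl hux
          · exact absurd rfl huw
          · exact absurd rfl huy
          · exact absurd rfl huz
        · intro h1
          refine Or.inl ⟨h1, ?_, ?_⟩
          · rintro (⟨rfl, -⟩ | ⟨rfl, -⟩)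
            · exact hux rfl
            · exact huy rfl
          · rintro (⟨rfl, -⟩ | ⟨rfl, -⟩)
            · exact huw rfl
            · exact huz rfl
      rw [this]; exact hreg u
  · rw [hadj]; exact Or.inl ⟨hvx, nepair hxv.symm hyv.symm, nepair hvw hvz⟩
  · rw [hadj]; exact Or.inl ⟨hvwa, nepair hxv.symm hyv.symm, nepair hvw hvz⟩
  · rw [hadj]; exact Or.inr (Or.inl rfl)

theorem stmt7 (n : ℕ) (G : SimpleGraph (Fin n))
    (hreg : ∀ u, (G.neighborSet u).ncard = 3)
    (v : Fin n)
    (hv : ∀ x w, G.Adj v x → G.Adj v w → ¬ G.Adj x w) :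
    ∃ y x w z : Fin n,
      y ≠ x ∧ y ≠ v ∧ y ≠ w ∧ y ≠ z ∧ x ≠ v ∧ x ≠ w ∧ x ≠ z ∧ v ≠ w ∧ v ≠ z ∧ w ≠ z ∧
      G.Adj x y ∧ G.Adj v x ∧ G.Adj v w ∧ G.Adj w z ∧ ¬ G.Adj x w ∧ ¬ G.Adj y z ∧
      (let G' := SimpleGraph.fromEdgeSet
          ((G.edgeSet \ {s(x,y), s(w,z)}) ∪ {s(x,w), s(y,z)});
        (∀ u, (G'.neighborSet u).ncard = 3) ∧ G'.Adj v x ∧ G'.Adj v w ∧ G'.Adj x w) := by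
  classical
  -- helper: degree ≥ 4 impossible
  have deg4 : ∀ t p q r s : Fin n, p ≠ q → p ≠ r → p ≠ s → q ≠ r → q ≠ s → r ≠ s →
      G.Adj t p → G.Adj t q → G.Adj t r → G.Adj t s → False := by
    intro t p q r s h1 h2 h3 h4 h5 h6 a1 a2 a3 a4
    have hsub : ({p, q, r, s} : Set (Fin n)) ⊆ G.neighborSet t := by
      rintro u (rfl | rfl | rfl | rfl) <;> assumption
    have h4c : ({p, q, r, s} : Set (Fin n)).ncard = 4 := by
      rw [Set.ncard_insert_of_notMem (by simp [h1, h2, h3]),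
        Set.ncard_insert_of_notMem (by simp [h4, h5]), Set.ncard_pair h6]
    have := Set.ncard_le_ncard hsub (Set.toFinite _)
    rw [h4c, hreg t] at this
    omega
  -- helper: the two non-v neighbors of a neighbor of v
  have pairs : ∀ s : Fin n, G.Adj v s → ∃ p q : Fin n,
      p ≠ q ∧ p ≠ v ∧ q ≠ v ∧ G.Adj s p ∧ G.Adj s q := by
    intro s hs
    have hvmem : v ∈ G.neighborSet s := hs.symm
    have h2 : (G.neighborSet s \ {v}).ncard = 2 := by
      rw [Set.ncard_diff_singleton_of_mem hvmem, hreg s]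
    obtain ⟨p, q, hpq, hset⟩ := Set.ncard_eq_two.mp h2
    have hp : p ∈ G.neighborSet s \ {v} := by rw [hset]; exact Or.inl rfl
    have hq : q ∈ G.neighborSet s \ {v} := by rw [hset]; exact Or.inr rfl
    exact ⟨p, q, hpq, hp.2, hq.2, hp.1, hq.1⟩
  -- key existence (simplified conditions)
  have key : ∃ y x w z : Fin n, (x ≠ w ∧ y ≠ v ∧ z ≠ v ∧ y ≠ z ∧ G.Adj v x ∧ G.Adj v w ∧
      G.Adj x y ∧ G.Adj w z) ∧ ¬ G.Adj y z := by
    by_contra hbad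
    push_neg at hbad
    obtain ⟨a, b, c, hab, hac, hbc, hN⟩ := Set.ncard_eq_three.mp (hreg v)
    have hva : G.Adj v a := by
      have : a ∈ G.neighborSet v := by rw [hN]; exact Or.inl rfl
      exact this
    have hvb : G.Adj v b := by
      have : b ∈ G.neighborSet v := by rw [hN]; exact Or.inr (Or.inl rfl)
      exact this
    have hvc : G.Adj v c := by
      have : c ∈ G.neighborSet v := by rw [hN]; exact Or.inr (Or.inr rfl)
      exact this
    by_cases hA : ∃ p s t : Fin n, p ≠ v ∧ G.Adj v s ∧ G.Adj v t ∧ s ≠ t ∧ G.Adj s p ∧ G.Adj t p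
    · obtain ⟨p, s, t, hpv, hvs, hvt, hst, hsp, htp⟩ := hA
      -- find a third neighbor r of v distinct from s and t
      have hr : ∃ r : Fin n, G.Adj v r ∧ r ≠ s ∧ r ≠ t := by
        have hs' : s ∈ ({a, b, c} : Set (Fin n)) := by rw [← hN]; exact hvs
        have ht' : t ∈ ({a, b, c} : Set (Fin n)) := by rw [← hN]; exact hvt
        rcases hs' with rfl | rfl | rfl <;> rcases ht' with rfl | rfl | rfl <;>
          first
            | exact absurd rfl hst
            | exact ⟨c, hvc, hac.symm, hbc.symm⟩
            | exact ⟨b, hvb, hab.symm, hbc⟩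
            | exact ⟨c, hvc, hbc.symm, hac.symm⟩
            | exact ⟨a, hva, hab, hac⟩
            | exact ⟨b, hvb, hbc, hab.symm⟩
            | exact ⟨a, hva, hac, hab⟩
      obtain ⟨r, hvr, hrs, hrt⟩ := hr
      obtain ⟨r1, r2, hr12, hr1v, hr2v, har1, har2⟩ := pairs r hvr
      have hps : p ≠ s := hsp.ne'
      have hpt : p ≠ t := htp.ne'
      -- non-adjacency among neighbors of v
      have hnsr : ¬ G.Adj s r := hv s r hvs hvr
      have hntr : ¬ G.Adj t r := hv t r hvt hvr
      have hr1s : r1 ≠ s := fun h => hnsr (h ▸ har1).symm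
      have hr1t : r1 ≠ t := fun h => hntr (h ▸ har1).symm
      have hr2s : r2 ≠ s := fun h => hnsr (h ▸ har2).symm
      have hr2t : r2 ≠ t := fun h => hntr (h ▸ har2).symm
      by_cases h1 : p = r1
      · subst h1
        have hadj2 : G.Adj p r2 :=
          hbad p s r r2 ⟨hrs.symm, hpv, hr2v, hr12, hvs, hvr, hsp, har2⟩
        exact deg4 p s t r r2 hst hrs.symm hr2s.symm hrt.symm hr2t.symm
          (fun h => G.irrefl (h ▸ har2)) hsp.symm htp.symm har1.symm hadj2
      · have hadj1 : G.Adj p r1 :=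
          hbad p s r r1 ⟨hrs.symm, hpv, hr1v, h1, hvs, hvr, hsp, har1⟩
        by_cases h2 : p = r2
        · subst h2
          exact deg4 p s t r r1 hst hrs.symm hr1s.symm hrt.symm hr1t.symm
            (fun h => G.irrefl (h ▸ har1)) hsp.symm htp.symm har2.symm hadj1
        · have hadj2 : G.Adj p r2 :=
            hbad p s r r2 ⟨hrs.symm, hpv, hr2v, h2, hvs, hvr, hsp, har2⟩
          exact deg4 p r1 r2 s t hr12 hr1s hr1t hr2s hr2t hst hadj1 hadj2 hsp.symm htp.symm
    · push_neg at hA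
      obtain ⟨a1, a2, ha12, ha1v, ha2v, haa1, haa2⟩ := pairs a hva
      obtain ⟨b1, b2, hb12, hb1v, hb2v, hbb1, hbb2⟩ := pairs b hvb
      obtain ⟨c1, c2, hc12, hc1v, hc2v, hcc1, hcc2⟩ := pairs c hvc
      -- a1 distinct from b1, b2, c1 since no common neighbors
      have hne : ∀ p q : Fin n, p ≠ v → G.Adj b p → G.Adj c q → p ≠ q := by
        intro p q hp h1 h2 h
        subst h
        exact hA p b c hp hvb hvc hbc h1 h2
      have ha1b1 : a1 ≠ b1 := fun h => hA a1 a b ha1v hva hvb hab haa1 (h ▸ hbb1)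
      have ha1b2 : a1 ≠ b2 := fun h => hA a1 a b ha1v hva hvb hab haa1 (h ▸ hbb2)
      have ha1c1 : a1 ≠ c1 := fun h => hA a1 a c ha1v hva hvc hac haa1 (h ▸ hcc1)
      have hb1c1 : b1 ≠ c1 := hne b1 c1 hb1v hbb1 hcc1
      have hb2c1 : b2 ≠ c1 := hne b2 c1 hb2v hbb2 hcc1
      have hadjb1 : G.Adj a1 b1 := hbad a1 a b b1 ⟨hab, ha1v, hb1v, ha1b1, hva, hvb, haa1, hbb1⟩
      have hadjb2 : G.Adj a1 b2 := hbad a1 a b b2 ⟨hab, ha1v, hb2v, ha1b2, hva, hvb, haa1, hbb2⟩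
      have hadjc1 : G.Adj a1 c1 := hbad a1 a c c1 ⟨hac, ha1v, hc1v, ha1c1, hva, hvc, haa1, hcc1⟩
      have hab1 : a ≠ b1 := fun h => (hv a b hva hvb) (h ▸ hbb1).symm
      have hab2 : a ≠ b2 := fun h => (hv a b hva hvb) (h ▸ hbb2).symm
      have hac1 : a ≠ c1 := fun h => (hv a c hva hvc) (h ▸ hcc1).symm
      exact deg4 a1 a b1 b2 c1 hab1 hab2 hac1 hb12 hb1c1 hb2c1 haa1.symm hadjb1 hadjb2 hadjc1
  obtain ⟨y, x, w, z, ⟨hxw', hyv, hzv, hyz, hvx, hvw, hxy, hwz'⟩, hnyz⟩ := key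
  have hnxw : ¬ G.Adj x w := hv x w hvx hvw
  have hyx : y ≠ x := fun h => G.irrefl (h ▸ hxy)
  have hyw : y ≠ w := fun h => hnxw (h ▸ hxy)
  have hxv : x ≠ v := fun h => G.irrefl (h ▸ hvx)
  have hxz : x ≠ z := fun h => hnxw (h ▸ hwz').symm
  have hvw' : v ≠ w := hvw.ne
  have hwzne : w ≠ z := hwz'.ne
  exact ⟨y, x, w, z, hyx, hyv, hyw, hyz, hxv, hxw', hxz, hvw', fun h => hzv h.symm, hwzne,
    hxy, hvx, hvw, hwz', hnxw, hnyz,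
    switch_aux hreg hyx hyv hyw hyz hxv hxw' hxz hvw' (fun h => hzv h.symm) hwzne
      hxy hvx hvw hwz' hnxw hnyz⟩
end

section
/- If vertices v,w,x,y span a diamond in a simple 3-regular graph (with edges vw, vx, wx, wy, xy present and vy absent), and the third neighbours a of v and b of y are distinct with ab not an edge, then deleting edges av and by and inserting edges vy and ab yields a simple 3-regular graph in which {v,w,x,y} induces a K_4 component. -/
/-!
In a cubic graph the diamond pins down the neighbourhoods: `N(v) = {w, x, a}`, `N(y) = {w, x, b}`,
`N(w) = {v, x, y}` and `N(x) = {v, w, y}` (in particular `v ≠ y`, since `b ∉ N(v)`). Replacing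
`av, by` by `vy, ab` is a 2-switch: each of `a, v, b, y` trades exactly one neighbour for a former
non-neighbour, so all degrees are preserved, and afterwards `v` and `y` see exactly the other three
diamond vertices, so `{v, w, x, y}` is a `K₄` component.
-/

namespace SimpleGraph

variable {V : Type*} (G : SimpleGraph V)

def switch (a v b y : V) : SimpleGraph V :=
  fromEdgeSet ((G.edgeSet \ {s(a, v), s(b, y)}) ∪ {s(v, y), s(a, b)})

variable {G} {a v b y u : V}

theorem switch_flip (a v b y : V) : G.switch a v b y = G.switch v a y b := by
  rw [switch, switch, Sym2.eq_swap (a := v) (b := a), Sym2.eq_swap (a := y) (b := b),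
    Set.pair_comm (s(a, b))]

theorem switch_comm (a v b y : V) : G.switch a v b y = G.switch b y a v := by
  rw [switch, switch, Set.pair_comm (s(b, y)), Sym2.eq_swap (a := a) (b := b),
    Sym2.eq_swap (a := y) (b := v)]

theorem neighborSet_switch (hva : v ≠ a) (hvb : v ≠ b) (hvy : v ≠ y) :
    (G.switch a v b y).neighborSet v = insert y (G.neighborSet v \ {a}) := by
  ext z
  simp only [switch, mem_neighborSet, fromEdgeSet_adj, Set.mem_union, Set.mem_sdiff,
    Set.mem_insert_iff, Set.mem_singleton_iff, mem_edgeSet, Sym2.eq_iff]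
  grind [G.ne_of_adj]

theorem neighborSet_switch_of_notMem (hu : u ∉ ({a, v, b, y} : Set V)) :
    (G.switch a v b y).neighborSet u = G.neighborSet u := by
  ext z
  simp only [Set.mem_insert_iff, Set.mem_singleton_iff, not_or] at hu
  simp only [switch, mem_neighborSet, fromEdgeSet_adj, Set.mem_union, Set.mem_sdiff,
    Set.mem_insert_iff, Set.mem_singleton_iff, mem_edgeSet, Sym2.eq_iff]
  grind [G.ne_of_adj]

theorem ncard_neighborSet_switch (hav : G.Adj a v) (hby : G.Adj b y) (hnvy : ¬G.Adj v y)
    (hnab : ¬G.Adj a b) (hab : a ≠ b) (hay : a ≠ y) (hvb : v ≠ b) (hvy : v ≠ y) (u : V) :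
    ((G.switch a v b y).neighborSet u).ncard = (G.neighborSet u).ncard := by
  by_cases hu : u ∈ ({a, v, b, y} : Set V)
  · simp only [Set.mem_insert_iff, Set.mem_singleton_iff] at hu
    rcases hu with rfl | rfl | rfl | rfl
    · rw [switch_flip, neighborSet_switch hav.ne hay hab,
        Set.ncard_exchange (s := G.neighborSet _) hnab hav]
    · rw [neighborSet_switch hav.ne' hvb hvy,
        Set.ncard_exchange (s := G.neighborSet _) hnvy hav.symm]
    · rw [switch_comm, switch_flip, neighborSet_switch hby.ne hvb.symm hab.symm,
        Set.ncard_exchange (s := G.neighborSet _) (mt G.adj_symm hnab) hby]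
    · rw [switch_comm, neighborSet_switch hby.ne' hay.symm hvy.symm,
        Set.ncard_exchange (s := G.neighborSet _) (mt G.adj_symm hnvy) hby.symm]
  · rw [neighborSet_switch_of_notMem hu]

theorem neighborSet_eq_of_ncard_eq_three (h3 : (G.neighborSet u).ncard = 3) {p q r : V}
    (hp : G.Adj u p) (hq : G.Adj u q) (hr : G.Adj u r) (hpq : p ≠ q) (hpr : p ≠ r)
    (hqr : q ≠ r) : G.neighborSet u = {p, q, r} := by
  refine (Set.eq_of_subset_of_ncard_le ?_ ?_ (Set.finite_of_ncard_ne_zero (by omega))).symm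
  · simp [Set.insert_subset_iff, hp, hq, hr]
  · rw [h3, Set.ncard_insert_of_notMem (by simp [hpq, hpr]), Set.ncard_pair hqr]

end SimpleGraph

theorem stmt9 (n : ℕ) (G : SimpleGraph (Fin n))
    (hreg : ∀ u, (G.neighborSet u).ncard = 3)
    (v w x y a b : Fin n)
    (hvw : G.Adj v w) (hvx : G.Adj v x) (hwx : G.Adj w x)
    (hwy : G.Adj w y) (hxy : G.Adj x y) (hvy : ¬ G.Adj v y)
    (hab : a ≠ b) (hnab : ¬ G.Adj a b)
    (hav : G.Adj v a) (ha : a ∉ ({v, w, x, y} : Set (Fin n)))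
    (hby : G.Adj y b) (hb : b ∉ ({v, w, x, y} : Set (Fin n))) :
    (let G' := SimpleGraph.fromEdgeSet
        ((G.edgeSet \ {s(a,v), s(b,y)}) ∪ {s(v,y), s(a,b)});
      (∀ u, (G'.neighborSet u).ncard = 3) ∧
      ∀ u z : Fin n, u ∈ ({v, w, x, y} : Set (Fin n)) →
        (G'.Adj u z ↔ z ∈ ({v, w, x, y} : Set (Fin n)) ∧ z ≠ u)) := by
  obtain ⟨hva, hwa, hxa, hya⟩ : v ≠ a ∧ w ≠ a ∧ x ≠ a ∧ y ≠ a := by simpa [eq_comm] using ha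
  obtain ⟨hvb, hwb, hxb, hyb⟩ : v ≠ b ∧ w ≠ b ∧ x ≠ b ∧ y ≠ b := by simpa [eq_comm] using hb
  have Nv := G.neighborSet_eq_of_ncard_eq_three (hreg v) hvw hvx hav hwx.ne hwa hxa
  have hvy_ne : v ≠ y := by
    rintro rfl
    have hb : b ∈ G.neighborSet v := hby
    simp only [Nv, Set.mem_insert_iff, Set.mem_singleton_iff] at hb
    tauto
  have Ny := G.neighborSet_eq_of_ncard_eq_three (hreg y) hwy.symm hxy.symm hby hwx.ne hwb hxb
  have Nw := G.neighborSet_eq_of_ncard_eq_three (hreg w) hvw.symm hwx hwy hvx.ne hvy_ne hxy.ne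
  have Nx := G.neighborSet_eq_of_ncard_eq_three (hreg x) hvx.symm hwx.symm hxy hvw.ne hvy_ne hwy.ne
  refine ⟨fun u => (G.ncard_neighborSet_switch hav.symm hby.symm hvy hnab hab hya.symm hvb hvy_ne
    u).trans (hreg u), fun u z hu => ?_⟩
  rw [← SimpleGraph.mem_neighborSet]
  change z ∈ (G.switch a v b y).neighborSet u ↔ _
  have hw : w ∉ ({a, v, b, y} : Set (Fin n)) := by simp [hwa, hvw.ne', hwb, hwy.ne]
  have hx : x ∉ ({a, v, b, y} : Set (Fin n)) := by simp [hxa, hvx.ne', hxb, hxy.ne]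
  simp only [Set.mem_insert_iff, Set.mem_singleton_iff] at hu
  rcases hu with rfl | rfl | rfl | rfl <;>
    [rw [SimpleGraph.neighborSet_switch hva hvb hvy_ne, Nv];
      rw [SimpleGraph.neighborSet_switch_of_notMem hw, Nw];
      rw [SimpleGraph.neighborSet_switch_of_notMem hx, Nx];
      rw [SimpleGraph.switch_comm, SimpleGraph.neighborSet_switch hyb hya hvy_ne.symm, Ny]] <;>
  · simp only [Set.mem_insert_iff, Set.mem_singleton_iff, Set.mem_sdiff]
    grind [hvw.ne, hvx.ne, hwx.ne, hwy.ne, hxy.ne]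
end

section
/- A make triangle switch on a simple 3-regular graph increases the number of triangles by at most 4. -/
private lemma pair_mem {α : Type*} [DecidableEq α] {s : Finset α} {x : α}
    (hx : x ∈ s) (hc : s.card = 3) :
    ∃ a b, ∀ u ∈ s, u ≠ x → u = a ∨ u = b := by
  have hcard : (s \ {x}).card = 2 := by
    rw [Finset.card_sdiff_of_subset (by simpa using hx), hc, Finset.card_singleton]
  obtain ⟨a, b, -, hab⟩ := Finset.card_eq_two.mp hcard
  refine ⟨a, b, fun u hu hux => ?_⟩
  have : u ∈ s \ {x} := by simp [hu, hux]
  rw [hab] at this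
  simpa using this

private lemma tri_eq {α : Type*} [DecidableEq α] {s : Finset α} {x w : α}
    (hx : x ∈ s) (hw : w ∈ s) (hxw : x ≠ w) (hc : s.card = 3) :
    ∃ u, u ∈ s ∧ u ≠ x ∧ u ≠ w ∧ s = {x, w, u} := by
  have hsub : ({x, w} : Finset α) ⊆ s := by
    intro u hu
    simp only [Finset.mem_insert, Finset.mem_singleton] at hu
    rcases hu with rfl | rfl <;> assumption
  have hcard : (s \ {x, w}).card = 1 := by
    rw [Finset.card_sdiff_of_subset hsub, hc, Finset.card_insert_of_notMem (by simp [hxw]),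
      Finset.card_singleton]
  obtain ⟨u, hu⟩ := Finset.card_eq_one.mp hcard
  have hus : u ∈ s \ {x, w} := by rw [hu]; simp
  simp only [Finset.mem_sdiff, Finset.mem_insert, Finset.mem_singleton, not_or] at hus
  refine ⟨u, hus.1, hus.2.1, hus.2.2, ?_⟩
  have h2 := Finset.union_sdiff_of_subset hsub
  rw [hu] at h2
  rw [← h2]
  ext p
  simp [or_assoc]

theorem stmt10 (n : ℕ) (G : SimpleGraph (Fin n))
    (hreg : ∀ u, (G.neighborSet u).ncard = 3)
    (y x v w z : Fin n)
    (hd : [y, x, v, w, z].Nodup)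
    (h1 : G.Adj v x) (h2 : G.Adj v w) (h3 : G.Adj x y) (h4 : G.Adj w z)
    (h5 : ¬ G.Adj x w) (h6 : ¬ G.Adj y z) :
    ((SimpleGraph.fromEdgeSet
        ((G.edgeSet \ {s(x,y), s(w,z)}) ∪ {s(x,w), s(y,z)})).cliqueSet 3).ncard
      ≤ (G.cliqueSet 3).ncard + 4 := by
  classical
  simp only [List.nodup_cons, List.mem_cons, List.not_mem_nil, List.mem_singleton,
    not_or, List.nodup_nil, and_true] at hd
  obtain ⟨⟨hyx, hyv, hyw, hyz, -⟩, ⟨hxv, hxw, hxz, -⟩, ⟨hvw, hvz, -⟩, hwz, -⟩ := hd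
  set G' := SimpleGraph.fromEdgeSet
      ((G.edgeSet \ {s(x,y), s(w,z)}) ∪ {s(x,w), s(y,z)}) with hG'
  have hadj : ∀ p q : Fin n, G'.Adj p q ↔
      ((G.Adj p q ∧ s(p,q) ≠ s(x,y) ∧ s(p,q) ≠ s(w,z)) ∨ s(p,q) = s(x,w) ∨ s(p,q) = s(y,z))
        ∧ p ≠ q := by
    intro p q
    rw [hG', SimpleGraph.fromEdgeSet_adj]
    simp only [Set.mem_union, Set.mem_diff, Set.mem_insert_iff, Set.mem_singleton_iff,
      SimpleGraph.mem_edgeSet, not_or]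
    try tauto
  have hnx : (G.neighborFinset x).card = 3 := by
    have := hreg x; rwa [Set.ncard_eq_toFinset_card'] at this
  have hny : (G.neighborFinset y).card = 3 := by
    have := hreg y; rwa [Set.ncard_eq_toFinset_card'] at this
  obtain ⟨a₁, a₂, ha⟩ := pair_mem ((G.mem_neighborFinset x y).mpr h3) hnx
  obtain ⟨b₁, b₂, hb⟩ := pair_mem ((G.mem_neighborFinset y x).mpr h3.symm) hny
  -- main inclusion
  have hsub : G'.cliqueSet 3 ⊆
      G.cliqueSet 3 ∪ {({x, w, a₁} : Finset (Fin n)), {x, w, a₂}, {y, z, b₁}, {y, z, b₂}} := by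
    intro t ht
    rw [SimpleGraph.mem_cliqueSet_iff] at ht
    obtain ⟨hclq, hcard⟩ := ht
    by_cases hxw' : x ∈ t ∧ w ∈ t
    · obtain ⟨u, hu, hux, huw, hteq⟩ := tri_eq hxw'.1 hxw'.2 hxw hcard
      have hadjxu : G'.Adj x u := hclq hxw'.1 hu (Ne.symm hux)
      rw [hadj] at hadjxu
      have hGxu : G.Adj x u ∧ u ≠ y := by
        rcases hadjxu.1 with ⟨hg, hne1, _⟩ | hc | hc
        · refine ⟨hg, fun h => hne1 ?_⟩; rw [h]
        · exfalso
          rw [Sym2.eq_iff] at hc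
          rcases hc with ⟨_, rfl⟩ | ⟨rfl, _⟩ <;> simp_all
        · exfalso
          rw [Sym2.eq_iff] at hc
          rcases hc with ⟨rfl, _⟩ | ⟨rfl, _⟩ <;> simp_all
      have := ha u ((G.mem_neighborFinset x u).mpr hGxu.1) hGxu.2
      right
      rcases this with rfl | rfl
      · left; exact hteq
      · right; left; exact hteq
    · by_cases hyz' : y ∈ t ∧ z ∈ t
      · obtain ⟨u, hu, huy, huz, hteq⟩ := tri_eq hyz'.1 hyz'.2 hyz hcard
        have hadjyu : G'.Adj y u := hclq hyz'.1 hu (Ne.symm huy)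
        rw [hadj] at hadjyu
        have hGyu : G.Adj y u ∧ u ≠ x := by
          rcases hadjyu.1 with ⟨hg, hne1, _⟩ | hc | hc
          · refine ⟨hg, fun h => hne1 ?_⟩
            rw [h, Sym2.eq_swap]
          · exfalso
            rw [Sym2.eq_iff] at hc
            rcases hc with ⟨rfl, _⟩ | ⟨rfl, _⟩ <;> simp_all
          · exfalso
            rw [Sym2.eq_iff] at hc
            rcases hc with ⟨_, rfl⟩ | ⟨rfl, _⟩ <;> simp_all
        have := hb u ((G.mem_neighborFinset y u).mpr hGyu.1) hGyu.2
        right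
        rcases this with rfl | rfl
        · right; right; left; exact hteq
        · right; right; right; exact hteq
      · left
        rw [SimpleGraph.mem_cliqueSet_iff]
        refine ⟨fun {p} hp {q} hq hpq => ?_, hcard⟩
        have hpq' : G'.Adj p q := hclq hp hq hpq
        rw [hadj] at hpq'
        rcases hpq'.1 with ⟨hg, _, _⟩ | hc | hc
        · exact hg
        · exfalso
          rw [Sym2.eq_iff] at hc
          rcases hc with ⟨rfl, rfl⟩ | ⟨rfl, rfl⟩ <;> exact hxw' ⟨by assumption, by assumption⟩
        · exfalso
          rw [Sym2.eq_iff] at hc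
          rcases hc with ⟨rfl, rfl⟩ | ⟨rfl, rfl⟩ <;> exact hyz' ⟨by assumption, by assumption⟩
  calc (G'.cliqueSet 3).ncard
      ≤ (G.cliqueSet 3 ∪ {({x, w, a₁} : Finset (Fin n)), {x, w, a₂}, {y, z, b₁}, {y, z, b₂}}).ncard :=
        Set.ncard_le_ncard hsub (Set.toFinite _)
    _ ≤ (G.cliqueSet 3).ncard +
        ({({x, w, a₁} : Finset (Fin n)), {x, w, a₂}, {y, z, b₁}, {y, z, b₂}} : Set (Finset (Fin n))).ncard :=
        Set.ncard_union_le _ _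
    _ ≤ (G.cliqueSet 3).ncard + 4 := by
        gcongr
        have h1' : ({({y, z, b₂} : Finset (Fin n))} : Set (Finset (Fin n))).ncard ≤ 1 := by
          simp [Set.ncard_singleton]
        have h2' : ({({y, z, b₁} : Finset (Fin n)), {y, z, b₂}} : Set (Finset (Fin n))).ncard ≤ 2 :=
          le_trans (Set.ncard_insert_le _ _) (by omega)
        have h3' : ({({x, w, a₂} : Finset (Fin n)), {y, z, b₁}, {y, z, b₂}} : Set (Finset (Fin n))).ncard ≤ 3 :=
          le_trans (Set.ncard_insert_le _ _) (by omega)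
        exact le_trans (Set.ncard_insert_le _ _) (by omega)
end

section
/- In a simple 3-regular graph G on n vertices, the number of edges lying on triangles is at most (5s + t)/4 · n, where s·n is the number of vertices on triangles and t·n is the number of vertices on tetrahedra (K_4 components). -/
/-!
Let `T` be the graph of edges of `G` lying on triangles. In a cubic graph every vertex has
`T`-degree `0`, `2` or `3`, so the handshake lemma gives
`4 |E(T)| + #{d = 2} = 5 #{d > 0} + #{d = 3}`. If `v` has `T`-degree `3` but lies in no `K₄`, two
neighbours `b`, `c` of `v` are non-adjacent; then the third neighbour `a` is adjacent to both, so
`N(v) = {a, b, c}` and `N(a) = {v, b, c}`, and the third neighbour of `b` shares no neighbour with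
`b`: both `b` and `c` have `T`-degree `2`.
Since a vertex of `T`-degree `2` has only two `T`-neighbours, double counting gives
`#{d = 3, not in a K₄} ≤ #{d = 2}`.
-/

open Finset

namespace SimpleGraph

variable {V : Type*} (G : SimpleGraph V)

def triangleEdgeGraph : SimpleGraph V where
  Adj u v := G.Adj u v ∧ ∃ w, G.Adj u w ∧ G.Adj v w
  symm := ⟨fun _ _ ⟨h, w, hu, hv⟩ => ⟨h.symm, w, hv, hu⟩⟩
  loopless := ⟨fun u h => G.loopless.irrefl u h.1⟩

instance [Fintype V] [DecidableRel G.Adj] : DecidableRel G.triangleEdgeGraph.Adj :=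
  fun _ _ => inferInstanceAs (Decidable (_ ∧ _))

variable {G}

theorem triangleEdgeGraph_adj {u v : V} :
    G.triangleEdgeGraph.Adj u v ↔ G.Adj u v ∧ ∃ w, G.Adj u w ∧ G.Adj v w :=
  Iff.rfl

theorem triangleEdgeGraph_le : G.triangleEdgeGraph ≤ G := fun _ _ h => h.1

theorem edgeSet_triangleEdgeGraph :
    G.triangleEdgeGraph.edgeSet =
      {e | e ∈ G.edgeSet ∧ ∃ p q r, e = s(p, q) ∧ G.Adj p r ∧ G.Adj q r} := by
  ext e
  induction e using Sym2.ind with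
  | _ u v =>
    simp only [mem_edgeSet, triangleEdgeGraph_adj, Set.mem_ofPred_eq, Sym2.eq_iff]
    constructor
    · rintro ⟨huv, r, hur, hvr⟩
      exact ⟨huv, u, v, r, Or.inl ⟨rfl, rfl⟩, hur, hvr⟩
    · rintro ⟨huv, p, q, r, ⟨rfl, rfl⟩ | ⟨rfl, rfl⟩, hpr, hqr⟩
      · exact ⟨huv, r, hpr, hqr⟩
      · exact ⟨huv, r, hqr, hpr⟩

theorem exists_mem_cliqueSet_three_of_triangleEdgeGraph_adj {u v : V}
    (h : G.triangleEdgeGraph.Adj u v) : ∃ t ∈ G.cliqueSet 3, u ∈ t := by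
  classical
  obtain ⟨huv, w, huw, hvw⟩ := h
  exact ⟨{u, v, w}, is3Clique_triple_iff.mpr ⟨huv, huw, hvw⟩, mem_insert_self _ _⟩

section Finite

variable [Fintype V] [DecidableRel G.Adj]

theorem one_lt_degree_triangleEdgeGraph {u v : V} (h : G.triangleEdgeGraph.Adj u v) :
    1 < G.triangleEdgeGraph.degree u := by
  obtain ⟨huv, w, huw, hvw⟩ := h
  refine one_lt_card.mpr ⟨v, ?_, w, ?_, hvw.ne⟩ <;> rw [mem_neighborFinset]
  · exact ⟨huv, w, huw, hvw⟩
  · exact ⟨huw, v, huv, hvw.symm⟩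

theorem triangleEdgeGraph_adj_of_degree_eq {u v : V}
    (h : G.triangleEdgeGraph.degree u = G.degree u) (huv : G.Adj u v) :
    G.triangleEdgeGraph.Adj u v := by
  have hsub : G.triangleEdgeGraph.neighborFinset u ⊆ G.neighborFinset u := fun w hw => by
    rw [mem_neighborFinset] at hw ⊢
    exact hw.1
  have heq := eq_of_subset_of_card_le hsub (by rw [card_neighborFinset_eq_degree,
    card_neighborFinset_eq_degree, h])
  rw [← mem_neighborFinset, heq, mem_neighborFinset]
  exact huv

theorem eq_or_eq_or_eq_of_adj_of_degree_eq_three {u v p q r : V} (hu : G.degree u = 3)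
    (hp : G.Adj u p) (hq : G.Adj u q) (hr : G.Adj u r) (hpq : p ≠ q) (hpr : p ≠ r) (hqr : q ≠ r)
    (hv : G.Adj u v) : v = p ∨ v = q ∨ v = r := by
  classical
  have hsub : ({p, q, r} : Finset V) ⊆ G.neighborFinset u := by
    intro w hw
    simp only [mem_insert, mem_singleton] at hw
    rcases hw with rfl | rfl | rfl <;> rwa [mem_neighborFinset]
  have heq := eq_of_subset_of_card_le hsub (by rw [card_neighborFinset_eq_degree, hu,
    card_eq_three.mpr ⟨p, q, r, hpq, hpr, hqr, rfl⟩])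
  rw [← mem_neighborFinset, ← heq] at hv
  simpa using hv

theorem exists_adj_ne_ne_of_degree_eq_three {u p q : V} (hu : G.degree u = 3) :
    ∃ v, G.Adj u v ∧ v ≠ p ∧ v ≠ q := by
  classical
  obtain ⟨v, hv, hvpq⟩ :=
    exists_mem_notMem_of_card_lt_card (s := {p, q}) (t := G.neighborFinset u)
    (by rw [card_neighborFinset_eq_degree, hu]; exact (card_le_two).trans_lt (by norm_num))
  simp only [mem_insert, mem_singleton, not_or] at hvpq
  exact ⟨v, (mem_neighborFinset _ _ _).mp hv, hvpq⟩

theorem exists_mem_cliqueSet_four_of_isClique_neighborSet {v : V} (hv : G.degree v = 3)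
    (h : G.IsClique (G.neighborSet v)) : ∃ t ∈ G.cliqueSet 4, v ∈ t := by
  classical
  refine ⟨insert v (G.neighborFinset v), ⟨?_, ?_⟩, mem_insert_self _ _⟩
  · rw [coe_insert, coe_neighborFinset, isClique_insert]
    exact ⟨h, fun w hw _ => hw⟩
  · rw [card_insert_of_notMem (G.notMem_neighborFinset_self v), card_neighborFinset_eq_degree, hv]

theorem exists_common_neighbor_of_not_adj {v b c : V} (hv : G.degree v = 3)
    (hvT : G.triangleEdgeGraph.degree v = 3) (hb : G.Adj v b) (hc : G.Adj v c) (hbc : b ≠ c)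
    (hnbc : ¬ G.Adj b c) : ∃ a, G.Adj v a ∧ G.Adj a b ∧ G.Adj a c := by
  have hvT' : G.triangleEdgeGraph.degree v = G.degree v := hvT.trans hv.symm
  obtain ⟨-, a, hva, hba⟩ := triangleEdgeGraph_adj_of_degree_eq hvT' hb
  obtain ⟨-, a', hva', hca'⟩ := triangleEdgeGraph_adj_of_degree_eq hvT' hc
  have hac : a ≠ c := by rintro rfl; exact hnbc hba
  rcases eq_or_eq_or_eq_of_adj_of_degree_eq_three hv hva hb hc hba.ne' hac hbc hva' with
    h | h | h <;> subst h
  · exact ⟨_, hva, hba.symm, hca'.symm⟩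
  · exact absurd hca'.symm hnbc
  · exact absurd hca' (G.loopless.irrefl _)

theorem degree_triangleEdgeGraph_lt_three {v a b c : V} (hreg : G.IsRegularOfDegree 3)
    (hva : G.Adj v a) (hvb : G.Adj v b) (hvc : G.Adj v c) (hab : G.Adj a b) (hac : G.Adj a c)
    (hbc : b ≠ c) (hnbc : ¬ G.Adj b c) : G.triangleEdgeGraph.degree b < 3 := by
  by_contra! h
  have hbT : G.triangleEdgeGraph.degree b = G.degree b :=
    le_antisymm (degree_le_of_le triangleEdgeGraph_le) (hreg.degree_eq b ▸ h)
  obtain ⟨x, hbx, hxv, hxa⟩ := exists_adj_ne_ne_of_degree_eq_three (p := v) (q := a) (hreg b)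
  obtain ⟨-, w, hbw, hxw⟩ := triangleEdgeGraph_adj_of_degree_eq hbT hbx
  have hxc : x ≠ c := by rintro rfl; exact hnbc hbx
  rcases eq_or_eq_or_eq_of_adj_of_degree_eq_three (hreg b) hvb.symm hab.symm hbx hva.ne hxv.symm
    hxa.symm hbw with hw | hw | hw <;> rw [hw] at hxw
  · rcases eq_or_eq_or_eq_of_adj_of_degree_eq_three (hreg v) hva hvb hvc hab.ne hac.ne hbc
      hxw.symm with rfl | rfl | rfl
    exacts [hxa rfl, G.loopless.irrefl _ hbx, hxc rfl]
  · rcases eq_or_eq_or_eq_of_adj_of_degree_eq_three (hreg a) hva.symm hab hac hvb.ne hvc.ne hbc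
      hxw.symm with rfl | rfl | rfl
    exacts [hxv rfl, G.loopless.irrefl _ hbx, hxc rfl]
  · exact G.loopless.irrefl _ hxw

theorem exists_adj_degree_triangleEdgeGraph_eq_two (hreg : G.IsRegularOfDegree 3) {v : V}
    (hvT : G.triangleEdgeGraph.degree v = 3) (hK : ¬ ∃ t ∈ G.cliqueSet 4, v ∈ t) :
    ∃ b c, b ≠ c ∧ G.triangleEdgeGraph.Adj v b ∧ G.triangleEdgeGraph.Adj v c ∧
      G.triangleEdgeGraph.degree b = 2 ∧ G.triangleEdgeGraph.degree c = 2 := by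
  obtain ⟨b, hb, c, hc, hbc, hnbc⟩ :
      ∃ b ∈ G.neighborSet v, ∃ c ∈ G.neighborSet v, b ≠ c ∧ ¬ G.Adj b c := by
    by_contra! h
    exact hK (exists_mem_cliqueSet_four_of_isClique_neighborSet (hreg v) h)
  obtain ⟨a, hva, hab, hac⟩ := exists_common_neighbor_of_not_adj (hreg v) hvT hb hc hbc hnbc
  have hvT' : G.triangleEdgeGraph.degree v = G.degree v := hvT.trans (hreg v).symm
  have hTb := triangleEdgeGraph_adj_of_degree_eq hvT' hb
  have hTc := triangleEdgeGraph_adj_of_degree_eq hvT' hc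
  have two_of_lt {x : V} (hx : G.triangleEdgeGraph.Adj v x)
      (hlt : G.triangleEdgeGraph.degree x < 3) : G.triangleEdgeGraph.degree x = 2 := by
    have := one_lt_degree_triangleEdgeGraph hx.symm
    omega
  exact ⟨b, c, hbc, hTb, hTc,
    two_of_lt hTb (degree_triangleEdgeGraph_lt_three hreg hva hb hc hab hac hbc hnbc),
    two_of_lt hTc (degree_triangleEdgeGraph_lt_three hreg hva hc hb hac hab hbc.symm
      fun h => hnbc h.symm)⟩

theorem degree_triangleEdgeGraph_eq_zero_or_two_or_three (hreg : G.IsRegularOfDegree 3)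
    (v : V) : G.triangleEdgeGraph.degree v = 0 ∨ G.triangleEdgeGraph.degree v = 2 ∨
      G.triangleEdgeGraph.degree v = 3 := by
  have hle : G.triangleEdgeGraph.degree v ≤ 3 :=
    hreg.degree_eq v ▸ degree_le_of_le triangleEdgeGraph_le
  rcases Nat.eq_zero_or_pos (G.triangleEdgeGraph.degree v) with h | h
  · exact Or.inl h
  · obtain ⟨u, hu⟩ := card_pos.mp h
    have := one_lt_degree_triangleEdgeGraph ((mem_neighborFinset _ _ _).mp hu)
    omega

theorem four_mul_card_edgeFinset_triangleEdgeGraph_add (hreg : G.IsRegularOfDegree 3) :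
    4 * #G.triangleEdgeGraph.edgeFinset + #{v | G.triangleEdgeGraph.degree v = 2} =
      5 * #{v | 0 < G.triangleEdgeGraph.degree v} + #{v | G.triangleEdgeGraph.degree v = 3} := by
  rw [show 4 * #G.triangleEdgeGraph.edgeFinset = 2 * ∑ v, G.triangleEdgeGraph.degree v by
    rw [sum_degrees_eq_twice_card_edges]; ring]
  simp only [card_filter, mul_sum, ← sum_add_distrib]
  -- pointwise, `2 d + [d = 2] = 5 [0 < d] + [d = 3]` for each `d ∈ {0, 2, 3}`
  refine sum_congr rfl fun v _ => ?_
  rcases degree_triangleEdgeGraph_eq_zero_or_two_or_three hreg v with h | h | h <;> simp [h]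

theorem card_degree_triangleEdgeGraph_pos_le :
    #{v | 0 < G.triangleEdgeGraph.degree v} ≤ {v | ∃ t ∈ G.cliqueSet 3, v ∈ t}.ncard := by
  rw [← Set.ncard_coe_finset, coe_filter]
  refine Set.ncard_le_ncard fun v hv => ?_
  obtain ⟨u, hu⟩ := card_pos.mp hv.2
  exact exists_mem_cliqueSet_three_of_triangleEdgeGraph_adj ((mem_neighborFinset _ _ _).mp hu)

theorem ncard_degree_triangleEdgeGraph_eq_three_not_mem_cliqueSet_four_le
    (hreg : G.IsRegularOfDegree 3) :
    {v | G.triangleEdgeGraph.degree v = 3 ∧ ¬ ∃ t ∈ G.cliqueSet 4, v ∈ t}.ncard ≤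
      #{v | G.triangleEdgeGraph.degree v = 2} := by
  classical
  rw [Set.ncard_eq_toFinset_card']
  have := card_mul_le_card_mul (m := 2) (n := 2) G.triangleEdgeGraph.Adj
    (s := {v | G.triangleEdgeGraph.degree v = 3 ∧ ¬ ∃ t ∈ G.cliqueSet 4, v ∈ t}.toFinset)
    (t := {v | G.triangleEdgeGraph.degree v = 2}) ?_ ?_
  · omega
  · intro v hv
    rw [Set.mem_toFinset] at hv
    obtain ⟨b, c, hbc, hb, hc, hb2, hc2⟩ :=
      exists_adj_degree_triangleEdgeGraph_eq_two hreg hv.1 hv.2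
    rw [← card_pair hbc]
    refine card_le_card fun x hx => ?_
    simp only [mem_insert, mem_singleton] at hx
    rcases hx with rfl | rfl <;> simp [bipartiteAbove, *]
  · intro c hc
    rw [mem_filter] at hc
    refine (card_le_card fun v hv => ?_).trans hc.2.le
    rw [mem_bipartiteBelow] at hv
    exact (mem_neighborFinset _ _ _).mpr hv.2.symm

theorem card_degree_triangleEdgeGraph_eq_three_le (hreg : G.IsRegularOfDegree 3) :
    #{v | G.triangleEdgeGraph.degree v = 3} ≤
      {v | ∃ t ∈ G.cliqueSet 4, v ∈ t}.ncard + #{v | G.triangleEdgeGraph.degree v = 2} := by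
  rw [← Set.ncard_coe_finset, coe_filter_univ]
  calc {v | G.triangleEdgeGraph.degree v = 3}.ncard
      ≤ ({v | ∃ t ∈ G.cliqueSet 4, v ∈ t} ∪
          {v | G.triangleEdgeGraph.degree v = 3 ∧ ¬ ∃ t ∈ G.cliqueSet 4, v ∈ t}).ncard :=
        Set.ncard_le_ncard fun v hv => by by_cases hK : ∃ t ∈ G.cliqueSet 4, v ∈ t <;> simp_all
    _ ≤ _ := Set.ncard_union_le _ _
    _ ≤ _ := add_le_add_right
        (ncard_degree_triangleEdgeGraph_eq_three_not_mem_cliqueSet_four_le hreg) _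

end Finite

end SimpleGraph

theorem stmt19 (n : ℕ) (G : SimpleGraph (Fin n))
    (hreg : ∀ u, (G.neighborSet u).ncard = 3) :
    4 * {e : Sym2 (Fin n) | e ∈ G.edgeSet ∧
          ∃ p q r, e = s(p, q) ∧ G.Adj p r ∧ G.Adj q r}.ncard
      ≤ 5 * {u : Fin n | ∃ t ∈ G.cliqueSet 3, u ∈ t}.ncard
        + {u : Fin n | ∃ t ∈ G.cliqueSet 4, u ∈ t}.ncard := by
  classical
  have hcubic : G.IsRegularOfDegree 3 := fun v => by
    rw [← SimpleGraph.card_neighborSet_eq_degree, ← Nat.card_eq_fintype_card,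
      Nat.card_coe_set_eq, hreg]
  rw [← SimpleGraph.edgeSet_triangleEdgeGraph, ← SimpleGraph.coe_edgeFinset, Set.ncard_coe_finset]
  have hcount := SimpleGraph.four_mul_card_edgeFinset_triangleEdgeGraph_add hcubic
  have htriangle := SimpleGraph.card_degree_triangleEdgeGraph_pos_le (G := G)
  have hK4 := SimpleGraph.card_degree_triangleEdgeGraph_eq_three_le hcubic
  omega
end
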